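/- In the whole-page model of Algorithm 1, if a write-back occurs after a write w and before a sync, and then a crash occurs with no intervening write, sync, or write-back between the write-back and the crash other than the sync (case [w, wb, sync, crash, r]), then at crash time latest_dev = DISK and the disk version is ≥ the version written by w, so recovery returns data no earlier than w. -/

import Mathlib

/- Whole-page model of Algorithm 1: single page with version numbers,
   state = (cache, disk, nvm, dirty, latest_dev). -/

inductive Dev | disk | nvm
deriving DecidableEq

inductive Event
  | write (v : ℕ)   -- write a fresh version v to the cache
  | sync
  | writeback
  | crash
  | read
deriving DecidableEq

structure St where
  cache : ℕ
  disk  : ℕ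
  nvm   : ℕ
  dirty : Bool
  dev   : Dev

/-- The version held by the device named by `latest_dev`. -/
def deviceVal (s : St) : ℕ :=
  match s.dev with
  | .disk => s.disk
  | .nvm  => s.nvm

/-- Algorithm 1 transitions.  A crash erases the cache and recovery restores
    it from the device indicated by `latest_dev`. -/
def step (s : St) : Event → St
  | .write v   => { s with cache := v, dirty := true }
  | .writeback => { s with disk := s.cache, dirty := false, dev := .disk }
  | .sync      => if s.dirty then { s with nvm := s.cache, dirty := false, dev := .nvm } else s
  | .crash     => { s with cache := deviceVal s }
  | .read      => s

def run (s : St) (tr : List Event) : St := tr.foldl step s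

theorem run_append (s : St) (t u : List Event) : run s (t ++ u) = run (run s t) u :=
  List.foldl_append

theorem run_singleton (s : St) (e : Event) : run s [e] = step s e :=
  rfl

theorem run_eq_self_of_forall_eq_read (s : St) {r : List Event} (h : ∀ e ∈ r, e = Event.read) :
    run s r = s := by
  induction r generalizing s with
  | nil => rfl
  | cons e t ih =>
    rw [h e List.mem_cons_self]
    exact ih s fun e he => h e (List.mem_cons_of_mem _ he)

theorem step_sync_of_dirty_eq_false {s : St} (h : s.dirty = false) : step s Event.sync = s := by
  simp [step, h]

/-- Case [w, wb, sync, crash, r]: a write-back occurs after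
    the write and before the sync (only reads may interleave).  At crash time
    latest_dev = DISK, the disk version is ≥ v, and recovery returns a version
    no earlier than v. -/
theorem case_w_wb_sync_crash_r (s₀ : St) (v : ℕ) (r₁ r₂ r₃ : List Event)
    (h₁ : ∀ e ∈ r₁, e = Event.read) (h₂ : ∀ e ∈ r₂, e = Event.read)
    (h₃ : ∀ e ∈ r₃, e = Event.read) :
    let sCrash := run s₀ ([Event.write v] ++ r₁ ++ [Event.writeback] ++ r₂ ++
                    [Event.sync] ++ r₃)
    sCrash.dev = Dev.disk ∧ v ≤ sCrash.disk ∧ v ≤ (step sCrash Event.crash).cache := by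
  intro sCrash
  have hCrash : sCrash = step (step s₀ (Event.write v)) Event.writeback := by
    simp only [sCrash, run_append, run_singleton, run_eq_self_of_forall_eq_read _ h₁,
      run_eq_self_of_forall_eq_read _ h₂, run_eq_self_of_forall_eq_read _ h₃]
    exact step_sync_of_dirty_eq_false rfl
  rw [hCrash]
  exact ⟨rfl, le_rfl, le_rfl⟩
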